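/- arXiv:2310.19499 — 3 statements merged into one kernel-verified Lean document; each statement's English description precedes it below -/
import Mathlib

section
/- Let A be a commutative ring and let M⁰ → M¹ → M² be a complex of projective A-modules with differentials d⁰, d¹. If the cohomology H²(M•) = M²/im(d¹) is a projective A-module, then for every A-algebra B the natural map H¹(M•) ⊗_A B → H¹(M• ⊗_A B) is an isomorphism. -/
/-!
Since `H²(M•)` is projective, `M² ≅ im d¹ ⊕ H²(M•)`, so `im d¹` is projective and `d¹` has a
generalized inverse `σ : M² → M¹`, i.e. `d¹ ∘ σ ∘ d¹ = d¹`. Then `id - σ ∘ d¹` retracts `M¹` onto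
`ker d¹`, and this retraction is given by a formula that commutes with base change. Composing its
base change with the quotient map yields the inverse of the natural map
`H¹(M•) ⊗_A B → H¹(M• ⊗_A B)`.
-/

open TensorProduct LinearMap

theorem Submodule.exists_retraction_of_projective_quotient {R M : Type*} [Ring R]
    [AddCommGroup M] [Module R M] (N : Submodule R M) [Module.Projective R (M ⧸ N)] :
    ∃ r : M →ₗ[R] N, r ∘ₗ N.subtype = LinearMap.id :=
  ((exact_subtype_mkQ N).split_tfae N.injective_subtype N.mkQ_surjective).out 0 1 |>.mp
    (N.mkQ.exists_rightInverse_of_surjective N.range_mkQ)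

section GeneralizedInverse

variable {R M N : Type*} [Ring R] [AddCommGroup M] [Module R M] [AddCommGroup N] [Module R N]

theorem LinearMap.exists_comp_comp_eq_self_of_projective [Module.Projective R N]
    (f : M →ₗ[R] N) [Module.Projective R (N ⧸ range f)] :
    ∃ g : N →ₗ[R] M, f ∘ₗ g ∘ₗ f = f := by
  obtain ⟨r, hr⟩ := (range f).exists_retraction_of_projective_quotient
  have := Module.Projective.of_split _ r hr
  obtain ⟨s, hs⟩ := f.rangeRestrict.exists_rightInverse_of_surjective f.range_rangeRestrict
  refine ⟨s ∘ₗ r, ?_⟩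
  calc f ∘ₗ (s ∘ₗ r) ∘ₗ f
      = (range f).subtype ∘ₗ (f.rangeRestrict ∘ₗ s) ∘ₗ (r ∘ₗ (range f).subtype) ∘ₗ
          f.rangeRestrict := rfl
    _ = f := by rw [hs, hr]; rfl

theorem LinearMap.comp_id_sub_comp_eq_zero {f : M →ₗ[R] N} {g : N →ₗ[R] M}
    (hg : f ∘ₗ g ∘ₗ f = f) : f ∘ₗ (LinearMap.id - g ∘ₗ f) = 0 := by
  rw [comp_sub, comp_id, hg, sub_self]

end GeneralizedInverse

/-- `H¹(M•)` for the complex `M0 → M1 → M2`, as the image of `ker d1` in `coker d0`. -/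
abbrev kerModRange {R M0 M1 M2 : Type*} [Ring R] [AddCommGroup M0] [Module R M0]
    [AddCommGroup M1] [Module R M1] [AddCommGroup M2] [Module R M2]
    (d0 : M0 →ₗ[R] M1) (d1 : M1 →ₗ[R] M2) : Submodule R (M1 ⧸ range d0) :=
  (ker d1).map (range d0).mkQ

section BaseChange

variable {A M0 M1 M2 : Type*} [CommRing A] [AddCommGroup M0] [Module A M0]
    [AddCommGroup M1] [Module A M1] [AddCommGroup M2] [Module A M2]
    (d0 : M0 →ₗ[A] M1) (d1 : M1 →ₗ[A] M2) (B : Type*) [CommRing B] [Algebra A B]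

def quotRangeBaseChange : (M1 ⧸ range d0) →ₗ[A] (B ⊗[A] M1) ⧸ range (d0.baseChange B) :=
  (range d0).liftQ ((range (d0.baseChange B)).mkQ.restrictScalars A ∘ₗ TensorProduct.mk A B M1 1)
    (by
      rintro _ ⟨m, rfl⟩
      exact (Submodule.Quotient.mk_eq_zero _).mpr ⟨1 ⊗ₜ m, rfl⟩)

@[simp]
theorem quotRangeBaseChange_mk (m : M1) :
    quotRangeBaseChange d0 B (Submodule.Quotient.mk m) = Submodule.Quotient.mk (1 ⊗ₜ m) :=
  rfl

variable {d1} in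
theorem LinearMap.tmul_mem_ker_baseChange {m : M1} (hm : d1 m = 0) (b : B) :
    b ⊗ₜ[A] m ∈ ker (d1.baseChange B) := by
  simp [hm]

def kerModRangeBaseChange :
    B ⊗[A] kerModRange d0 d1 →ₗ[B] kerModRange (d0.baseChange B) (d1.baseChange B) :=
  liftBaseChange B
    { toFun q := ⟨quotRangeBaseChange d0 B q, by
        obtain ⟨m, hm, hmq⟩ := q.2
        exact ⟨1 ⊗ₜ m, tmul_mem_ker_baseChange B hm 1, by rw [← hmq]; rfl⟩⟩
      map_add' q q' := Subtype.ext (map_add _ _ _)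
      map_smul' a q := Subtype.ext (map_smul _ _ _) }

theorem kerModRangeBaseChange_tmul (b : B) (m : M1) (hm : d1 m = 0) :
    kerModRangeBaseChange d0 d1 B (b ⊗ₜ ⟨Submodule.Quotient.mk m, Submodule.mem_map_of_mem hm⟩) =
      ⟨Submodule.Quotient.mk (b ⊗ₜ m),
        Submodule.mem_map_of_mem (tmul_mem_ker_baseChange B hm b)⟩ :=
  Subtype.ext <| by simp [kerModRangeBaseChange, ← Submodule.Quotient.mk_smul, smul_tmul']

section Inverse

variable {d0 d1} {σ : M2 →ₗ[A] M1}

variable (d0) in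
def toKerModRange (hσ : d1 ∘ₗ σ ∘ₗ d1 = d1) : M1 →ₗ[A] kerModRange d0 d1 :=
  codRestrict _ ((range d0).mkQ ∘ₗ (LinearMap.id - σ ∘ₗ d1)) fun m =>
    Submodule.mem_map_of_mem (LinearMap.congr_fun (comp_id_sub_comp_eq_zero hσ) m)

theorem toKerModRange_comp (hσ : d1 ∘ₗ σ ∘ₗ d1 = d1) (hc : d1 ∘ₗ d0 = 0) :
    toKerModRange d0 hσ ∘ₗ d0 = 0 := by
  ext m
  have : d1 (d0 m) = 0 := LinearMap.congr_fun hc m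
  simp [toKerModRange, this]

def kerModRangeBaseChangeInv (hσ : d1 ∘ₗ σ ∘ₗ d1 = d1) (hc : d1 ∘ₗ d0 = 0) :
    kerModRange (d0.baseChange B) (d1.baseChange B) →ₗ[B] B ⊗[A] kerModRange d0 d1 :=
  (range (d0.baseChange B)).liftQ ((toKerModRange d0 hσ).baseChange B)
    (range_le_ker_iff.mpr (by rw [← baseChange_comp, toKerModRange_comp hσ hc, baseChange_zero]))
      ∘ₗ Submodule.subtype _

theorem kerModRangeBaseChange_baseChange_toKerModRange (hσ : d1 ∘ₗ σ ∘ₗ d1 = d1)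
    (z : B ⊗[A] M1) :
    (kerModRangeBaseChange d0 d1 B ((toKerModRange d0 hσ).baseChange B z) :
      (B ⊗[A] M1) ⧸ range (d0.baseChange B)) =
      Submodule.Quotient.mk ((LinearMap.id - σ ∘ₗ d1).baseChange B z) := by
  induction z using TensorProduct.induction_on with
  | zero => simp
  | tmul b m =>
    exact congrArg Subtype.val <| kerModRangeBaseChange_tmul d0 d1 B b _
      (LinearMap.congr_fun (comp_id_sub_comp_eq_zero hσ) m)
  | add y z hy hz => simp only [map_add, Submodule.coe_add, hy, hz, Submodule.Quotient.mk_add]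

theorem kerModRangeBaseChange_comp_inv (hσ : d1 ∘ₗ σ ∘ₗ d1 = d1) (hc : d1 ∘ₗ d0 = 0) :
    kerModRangeBaseChange d0 d1 B ∘ₗ kerModRangeBaseChangeInv B hσ hc = LinearMap.id := by
  ext ⟨_, y, hy, rfl⟩
  have hy : d1.baseChange B y = 0 := hy
  change (kerModRangeBaseChange d0 d1 B ((toKerModRange d0 hσ).baseChange B y) :
    (B ⊗[A] M1) ⧸ range (d0.baseChange B)) = Submodule.Quotient.mk y
  rw [kerModRangeBaseChange_baseChange_toKerModRange, baseChange_sub, baseChange_id,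
    baseChange_comp]
  simp [hy]

theorem kerModRangeBaseChangeInv_comp (hσ : d1 ∘ₗ σ ∘ₗ d1 = d1) (hc : d1 ∘ₗ d0 = 0) :
    kerModRangeBaseChangeInv B hσ hc ∘ₗ kerModRangeBaseChange d0 d1 B = LinearMap.id := by
  ext ⟨_, x, hx, rfl⟩
  have hx : d1 x = 0 := hx
  change kerModRangeBaseChangeInv B hσ hc (kerModRangeBaseChange d0 d1 B
    ((1 : B) ⊗ₜ[A] ⟨Submodule.Quotient.mk x, Submodule.mem_map_of_mem hx⟩)) =
      (1 : B) ⊗ₜ[A] ⟨Submodule.Quotient.mk x, Submodule.mem_map_of_mem hx⟩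
  rw [kerModRangeBaseChange_tmul d0 d1 B 1 x hx]
  change (toKerModRange d0 hσ).baseChange B (1 ⊗ₜ x) = _
  rw [baseChange_tmul]
  exact congrArg _ (Subtype.ext (by simp [toKerModRange, hx]))

end Inverse

end BaseChange

/-- Base change of H¹ of a three-term complex of projective modules, when H² is projective:
the natural map H¹(M•) ⊗_A B → H¹(M• ⊗_A B) is an isomorphism.  Here H¹ is realized as the
image of ker d¹ in coker d⁰, and the natural map is pinned down by its values on elements
of the form (class of x) ⊗ 1. -/
theorem stmt_0 {A : Type*} [CommRing A] {M0 M1 M2 : Type*}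
    [AddCommGroup M0] [Module A M0] [AddCommGroup M1] [Module A M1]
    [AddCommGroup M2] [Module A M2]
    [Module.Projective A M2]
    (d0 : M0 →ₗ[A] M1) (d1 : M1 →ₗ[A] M2) (hc : d1 ∘ₗ d0 = 0)
    (hH2 : Module.Projective A (M2 ⧸ LinearMap.range d1))
    (B : Type*) [CommRing B] [Algebra A B] :
    ∃ e : (B ⊗[A] ↥(Submodule.map (LinearMap.range d0).mkQ (LinearMap.ker d1))) ≃ₗ[B]
        ↥(Submodule.map (LinearMap.range (LinearMap.baseChange B d0)).mkQ
            (LinearMap.ker (LinearMap.baseChange B d1))),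
      ∀ x : LinearMap.ker d1,
        e ((1 : B) ⊗ₜ[A]
            (⟨(LinearMap.range d0).mkQ (x : M1), Submodule.mem_map_of_mem x.2⟩ :
              ↥(Submodule.map (LinearMap.range d0).mkQ (LinearMap.ker d1)))) =
          ⟨(LinearMap.range (LinearMap.baseChange B d0)).mkQ ((1 : B) ⊗ₜ[A] (x : M1)),
            Submodule.mem_map_of_mem (p := LinearMap.ker (LinearMap.baseChange B d1)) (by
              have hx : d1 (x : M1) = 0 := x.2
              simp [LinearMap.mem_ker, LinearMap.baseChange_tmul, hx])⟩ := by
  have := hH2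
  obtain ⟨σ, hσ⟩ := d1.exists_comp_comp_eq_self_of_projective
  exact ⟨.ofLinearMap _ _ (kerModRangeBaseChange_comp_inv B hσ hc)
      (kerModRangeBaseChangeInv_comp B hσ hc),
    fun x => kerModRangeBaseChange_tmul d0 d1 B 1 x x.2⟩
end

section
/- Let A be a commutative ring, Λ₀ a free A[[t]]-module of rank n, and ∇ : Λ₀ → Λ₀ an A-linear endomorphism satisfying ∇(t·x) = t·x + t·∇(x) for all x (i.e., ∇(t^m λ) = m t^m λ + t^m ∇(λ)), such that the induced endomorphism of Λ₀/tΛ₀ is nilpotent. Then ∇ restricts to an A-linear automorphism of tΛ₀. -/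
/-!
Write `t` for `X`. From `∇(t • x) = t • x + t • ∇ x` one gets `∇(tᵐ • y) = tᵐ • (m • y + ∇ y)`,
so on `tᵐΛ₀ / tᵐ⁺¹Λ₀ ≅ Λ₀ / tΛ₀` the map `∇` acts as `m + ∇̄` with `∇̄` nilpotent; for `m ≥ 1`
this is invertible because `m` is a unit of the `ℚ`-algebra `A`. Being free of finite rank over
`A⟦t⟧`, `Λ₀` is `t`-adically complete and separated, so an endomorphism preserving the filtration
`tᵐΛ₀` and bijective on its graded pieces for `m ≥ 1` is bijective on `tΛ₀`: injectivity by
separatedness, surjectivity by successive approximation.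
-/

open PowerSeries

namespace IsAdicComplete

variable {R : Type*} [CommRing R] {I : Ideal R}

theorem of_linearEquiv {M N : Type*} [AddCommGroup M] [Module R M] [AddCommGroup N] [Module R N]
    [IsAdicComplete I M] (e : M ≃ₗ[R] N) : IsAdicComplete I N := by
  have hof : ⇑(AdicCompletion.of I N) =
      AdicCompletion.congr I e ∘ AdicCompletion.of I M ∘ e.symm := by
    ext x : 1
    simp [AdicCompletion.congr_apply, AdicCompletion.map_of]
  rw [← AdicCompletion.of_bijective_iff, hof]
  exact (AdicCompletion.congr I e).bijective.comp
    ((AdicCompletion.of_bijective I M).comp e.symm.bijective)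

instance pi {ι : Type*} [Finite ι] {M : ι → Type*} [∀ i, AddCommGroup (M i)] [∀ i, Module R (M i)]
    [∀ i, IsAdicComplete I (M i)] : IsAdicComplete I (∀ i, M i) := by
  classical
  cases nonempty_fintype ι
  have hof : AdicCompletion.pi I M ∘ AdicCompletion.of I (∀ i, M i) =
      Pi.map fun i ↦ AdicCompletion.of I (M i) := by
    ext x i : 2
    rw [Function.comp_apply, AdicCompletion.pi, LinearMap.pi_apply]
    exact AdicCompletion.map_of I _ x
  rw [← AdicCompletion.of_bijective_iff]
  have hpi : Function.Bijective (AdicCompletion.pi I M) := by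
    have h := (AdicCompletion.piEquivOfFintype I M).bijective
    rwa [show ⇑(AdicCompletion.piEquivOfFintype I M) = AdicCompletion.pi I M from
      funext (AdicCompletion.piEquivOfFintype_apply I M)] at h
  refine (Function.Bijective.of_comp_iff' hpi _).mp ?_
  rw [hof]
  exact Function.Bijective.piMap fun i ↦ AdicCompletion.of_bijective I (M i)

end IsAdicComplete

section GradedBijectivity

variable {R M : Type*} [CommRing R] [AddCommGroup M] [Module R M] {I : Ideal R} {f : M →+ M}
  {j : ℕ}

theorem mem_pow_smul_top_of_map_mem
    (hinj : ∀ m, j ≤ m → ∀ x ∈ I ^ m • (⊤ : Submodule R M),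
      f x ∈ I ^ (m + 1) • (⊤ : Submodule R M) → x ∈ I ^ (m + 1) • (⊤ : Submodule R M))
    {x : M} (hx : x ∈ I ^ j • (⊤ : Submodule R M)) {m : ℕ} (hm : j ≤ m)
    (hfx : f x ∈ I ^ m • (⊤ : Submodule R M)) : x ∈ I ^ m • (⊤ : Submodule R M) := by
  induction m, hm using Nat.le_induction with
  | base => exact hx
  | succ m hm ih =>
    exact hinj m hm x (ih (Submodule.pow_smul_top_le I M m.le_succ hfx)) hfx

theorem exists_sub_map_mem_pow_smul_top
    (hsurj : ∀ m, j ≤ m → ∀ z ∈ I ^ m • (⊤ : Submodule R M),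
      ∃ y ∈ I ^ m • (⊤ : Submodule R M), z - f y ∈ I ^ (m + 1) • (⊤ : Submodule R M))
    {z : M} (hz : z ∈ I ^ j • (⊤ : Submodule R M)) (m : ℕ) :
    ∃ y ∈ I ^ j • (⊤ : Submodule R M), z - f y ∈ I ^ (j + m) • (⊤ : Submodule R M) := by
  induction m with
  | zero => exact ⟨0, zero_mem _, by simpa using hz⟩
  | succ m ih =>
    obtain ⟨y, hy, hzy⟩ := ih
    obtain ⟨y', hy', hzy'⟩ := hsurj (j + m) (by omega) _ hzy
    refine ⟨y + y', add_mem hy (Submodule.pow_smul_top_le I M (by omega) hy'), ?_⟩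
    rw [map_add, ← sub_sub]
    exact hzy'

theorem IsAdicComplete.bijOn_pow_smul_top_of_gr [IsAdicComplete I M]
    (hmaps : ∀ m, j ≤ m → ∀ x ∈ I ^ m • (⊤ : Submodule R M), f x ∈ I ^ m • (⊤ : Submodule R M))
    (hinj : ∀ m, j ≤ m → ∀ x ∈ I ^ m • (⊤ : Submodule R M),
      f x ∈ I ^ (m + 1) • (⊤ : Submodule R M) → x ∈ I ^ (m + 1) • (⊤ : Submodule R M))
    (hsurj : ∀ m, j ≤ m → ∀ z ∈ I ^ m • (⊤ : Submodule R M),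
      ∃ y ∈ I ^ m • (⊤ : Submodule R M), z - f y ∈ I ^ (m + 1) • (⊤ : Submodule R M)) :
    Set.BijOn f (I ^ j • (⊤ : Submodule R M) : Submodule R M)
      (I ^ j • (⊤ : Submodule R M) : Submodule R M) := by
  have haus : ∀ x : M, (∀ m, x ∈ I ^ (j + m) • (⊤ : Submodule R M)) → x = 0 := fun x hx ↦
    IsHausdorff.haus inferInstance x fun m ↦
      SModEq.zero.mpr (Submodule.pow_smul_top_le I M (by omega) (hx m))
  refine ⟨fun x hx ↦ hmaps j le_rfl x hx, fun x₁ hx₁ x₂ hx₂ hf ↦ ?_, fun z hz ↦ ?_⟩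
  · refine sub_eq_zero.mp (haus _ fun m ↦ ?_)
    refine mem_pow_smul_top_of_map_mem hinj (sub_mem hx₁ hx₂) (by omega) ?_
    rw [map_sub, hf, sub_self]
    exact zero_mem _
  · choose y hy hzy using exists_sub_map_mem_pow_smul_top hsurj hz
    have hcauchy : ∀ {m n}, m ≤ n → y m ≡ y n [SMOD I ^ m • (⊤ : Submodule R M)] := by
      intro m n hmn
      refine (SModEq.sub_mem.mpr (Submodule.pow_smul_top_le I M (Nat.le_add_left m j) ?_)).symm
      refine mem_pow_smul_top_of_map_mem hinj (sub_mem (hy n) (hy m)) (Nat.le_add_right j m) ?_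
      have := sub_mem (hzy m) (Submodule.pow_smul_top_le I M (by omega) (hzy n))
      rwa [sub_sub_sub_cancel_left, ← map_sub] at this
    obtain ⟨L, hL⟩ := IsPrecomplete.prec inferInstance hcauchy
    have hLy : ∀ n, y n - L ∈ I ^ n • (⊤ : Submodule R M) := fun n ↦ SModEq.sub_mem.mp (hL n)
    refine ⟨L, ?_, (sub_eq_zero.mp (haus _ fun m ↦ ?_)).symm⟩
    · simpa using sub_mem (hy j) (Submodule.pow_smul_top_le I M (by omega) (hLy j))
    · have hfL : z - f L = (z - f (y (j + m))) + f (y (j + m) - L) := by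
        rw [map_sub]
        abel
      rw [hfL]
      exact add_mem (Submodule.pow_smul_top_le I M (by omega) (hzy (j + m)))
        (hmaps (j + m) (by omega) _ (hLy (j + m)))

end GradedBijectivity

theorem Submodule.bijective_smul_id_add_mapQ {A N : Type*} [CommRing A] [AddCommGroup N]
    [Module A N] (P : Submodule A N) {g : N →ₗ[A] N} (hg : P ≤ P.comap g) {k : ℕ}
    (hk : ∀ x, (g ^ k) x ∈ P) {c : A} (hc : IsUnit c) :
    Function.Bijective (c • (LinearMap.id : Module.End A (N ⧸ P)) + P.mapQ P g hg) := by
  have hnil : IsNilpotent (P.mapQ P g hg) := by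
    refine ⟨k, ?_⟩
    rw [← P.mapQ_pow hg]
    ext x
    simpa using hk x
  rw [← Module.End.isUnit_iff, ← Module.algebraMap_end_eq_smul_id]
  exact hnil.isUnit_add_left_of_commute (hc.map _) (Algebra.commute_algebraMap_left c _).symm

section ModuloSubmodule

variable {A N : Type*} [CommRing A] [AddCommGroup N] [Module A N] {P : Submodule A N}
  {g : N →ₗ[A] N} (hg : P ≤ P.comap g) {k : ℕ} (hk : ∀ x, (g ^ k) x ∈ P) {c : A} (hc : IsUnit c)
include hg hk hc

theorem Submodule.mem_of_smul_add_mem {y : N} (hy : c • y + g y ∈ P) : y ∈ P := by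
  rw [← Submodule.Quotient.mk_eq_zero] at hy ⊢
  exact (P.bijective_smul_id_add_mapQ hg hk hc).1 (by simpa using hy)

theorem Submodule.exists_smul_add_sub_mem (z : N) : ∃ y, c • y + g y - z ∈ P := by
  obtain ⟨y, hy⟩ := (P.bijective_smul_id_add_mapQ hg hk hc).2 (P.mkQ z)
  obtain ⟨y, rfl⟩ := P.mkQ_surjective y
  exact ⟨y, (Submodule.Quotient.eq P).mp (by simpa using hy)⟩

end ModuloSubmodule

theorem Submodule.mem_span_singleton_smul_top_iff {R M : Type*} [CommRing R] [AddCommGroup M]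
    [Module R M] (r : R) {x : M} :
    x ∈ Ideal.span {r} • (⊤ : Submodule R M) ↔ ∃ y, r • y = x := by
  simp [Submodule.ideal_span_singleton_smul, Submodule.mem_smul_pointwise_iff_exists]

theorem Submodule.mem_span_singleton_pow_smul_top_iff {R M : Type*} [CommRing R] [AddCommGroup M]
    [Module R M] (r : R) (m : ℕ) {x : M} :
    x ∈ Ideal.span {r} ^ m • (⊤ : Submodule R M) ↔ ∃ y, r ^ m • y = x := by
  rw [Ideal.span_singleton_pow, Submodule.mem_span_singleton_smul_top_iff]

theorem isUnit_natCast_of_ne_zero {A : Type*} [Semiring A] [Algebra ℚ A] {m : ℕ} (hm : m ≠ 0) :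
    IsUnit (m : A) := by
  simpa using (Nat.cast_ne_zero.mpr hm).isUnit.map (algebraMap ℚ A)

section Leibniz

variable {A M : Type*} [CommRing A] [AddCommGroup M] [Module A M] [Module A⟦X⟧ M]
  {nabla : M →ₗ[A] M}
  (hLeib : ∀ x : M, nabla ((X : A⟦X⟧) • x) = (X : A⟦X⟧) • x + (X : A⟦X⟧) • nabla x)
include hLeib

theorem map_X_pow_smul_of_map_X_smul (m : ℕ) (y : M) :
    nabla ((X : A⟦X⟧) ^ m • y) = (X : A⟦X⟧) ^ m • ((m : A) • y + nabla y) := by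
  induction m with
  | zero => simp
  | succ m ih =>
    rw [pow_succ', mul_smul, hLeib, ih, ← smul_add, ← smul_add, Nat.cast_succ, add_smul, one_smul,
      add_assoc, mul_smul, add_left_comm]

theorem map_mem_span_X_pow_smul_top (m : ℕ) (x : M)
    (hx : x ∈ Ideal.span {(X : A⟦X⟧)} ^ m • (⊤ : Submodule A⟦X⟧ M)) :
    nabla x ∈ Ideal.span {(X : A⟦X⟧)} ^ m • (⊤ : Submodule A⟦X⟧ M) := by
  obtain ⟨y, rfl⟩ := (Submodule.mem_span_singleton_pow_smul_top_iff _ m).mp hx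
  rw [map_X_pow_smul_of_map_X_smul hLeib]
  exact (Submodule.mem_span_singleton_pow_smul_top_iff _ m).mpr ⟨_, rfl⟩

variable [IsScalarTower A A⟦X⟧ M]

theorem le_comap_restrictScalars_span_X_smul_top :
    (Ideal.span {(X : A⟦X⟧)} • (⊤ : Submodule A⟦X⟧ M)).restrictScalars A ≤
      ((Ideal.span {(X : A⟦X⟧)} • (⊤ : Submodule A⟦X⟧ M)).restrictScalars A).comap nabla :=
  fun x hx ↦ by simpa using map_mem_span_X_pow_smul_top hLeib 1 x (by simpa using hx)

variable [Algebra ℚ A] {k : ℕ}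
  (hnil : ∀ x : M, (nabla ^ k) x ∈ Ideal.span {(X : A⟦X⟧)} • (⊤ : Submodule A⟦X⟧ M))
include hnil

theorem mem_span_X_pow_succ_smul_top_of_map_mem (hreg : IsSMulRegular M (X : A⟦X⟧))
    (m : ℕ) (hm : 1 ≤ m) (x : M)
    (hx : x ∈ Ideal.span {(X : A⟦X⟧)} ^ m • (⊤ : Submodule A⟦X⟧ M))
    (hfx : nabla x ∈ Ideal.span {(X : A⟦X⟧)} ^ (m + 1) • (⊤ : Submodule A⟦X⟧ M)) :
    x ∈ Ideal.span {(X : A⟦X⟧)} ^ (m + 1) • (⊤ : Submodule A⟦X⟧ M) := by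
  have hm : IsUnit (m : A) := isUnit_natCast_of_ne_zero (by omega)
  obtain ⟨y, rfl⟩ := (Submodule.mem_span_singleton_pow_smul_top_iff _ m).mp hx
  rw [map_X_pow_smul_of_map_X_smul hLeib, Submodule.mem_span_singleton_pow_smul_top_iff,
    pow_succ] at hfx
  obtain ⟨u, hu⟩ := hfx
  rw [mul_smul] at hu
  have hy : (m : A) • y + nabla y ∈ Ideal.span {(X : A⟦X⟧)} • (⊤ : Submodule A⟦X⟧ M) :=
    (Submodule.mem_span_singleton_smul_top_iff _).mpr ⟨u, hreg.pow m hu⟩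
  obtain ⟨v, rfl⟩ := (Submodule.mem_span_singleton_smul_top_iff _).mp
    (Submodule.mem_of_smul_add_mem (le_comap_restrictScalars_span_X_smul_top hLeib) hnil hm hy)
  exact (Submodule.mem_span_singleton_pow_smul_top_iff _ _).mpr ⟨v, by rw [pow_succ, mul_smul]⟩

theorem exists_sub_map_mem_span_X_pow_succ_smul_top (m : ℕ) (hm : 1 ≤ m) (z : M)
    (hz : z ∈ Ideal.span {(X : A⟦X⟧)} ^ m • (⊤ : Submodule A⟦X⟧ M)) :
    ∃ y ∈ Ideal.span {(X : A⟦X⟧)} ^ m • (⊤ : Submodule A⟦X⟧ M),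
      z - nabla y ∈ Ideal.span {(X : A⟦X⟧)} ^ (m + 1) • (⊤ : Submodule A⟦X⟧ M) := by
  have hm : IsUnit (m : A) := isUnit_natCast_of_ne_zero (by omega)
  obtain ⟨w, rfl⟩ := (Submodule.mem_span_singleton_pow_smul_top_iff _ m).mp hz
  obtain ⟨y, hy⟩ := Submodule.exists_smul_add_sub_mem
    (le_comap_restrictScalars_span_X_smul_top hLeib) hnil hm w
  obtain ⟨u, hu⟩ := (Submodule.mem_span_singleton_smul_top_iff _).mp hy
  refine ⟨(X : A⟦X⟧) ^ m • y, (Submodule.mem_span_singleton_pow_smul_top_iff _ m).mpr ⟨y, rfl⟩,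
    (Submodule.mem_span_singleton_pow_smul_top_iff _ _).mpr ⟨-u, ?_⟩⟩
  rw [map_X_pow_smul_of_map_X_smul hLeib, ← smul_sub, pow_succ, mul_smul, smul_neg, hu, neg_sub]

end Leibniz

theorem PowerSeries.isRegular_X {A : Type*} [CommRing A] : IsRegular (X : A⟦X⟧) :=
  ⟨X_mul_injective, mul_X_injective⟩

/-- Let Λ₀ be a free module of finite rank over A[[t]] (A a ℚ-algebra) and ∇ an A-linear
endomorphism with ∇(t·x) = t·x + t·∇(x), whose induced endomorphism of Λ₀/tΛ₀ is nilpotent.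
Then ∇ restricts to an A-linear automorphism of tΛ₀. -/
theorem stmt_6 {A : Type*} [CommRing A] [Algebra ℚ A] {M : Type*} [AddCommGroup M]
    [Module A M] [Module (PowerSeries A) M] [IsScalarTower A (PowerSeries A) M]
    {n : ℕ} (b : Module.Basis (Fin n) (PowerSeries A) M)
    (nabla : M →ₗ[A] M)
    (hLeib : ∀ x : M, nabla ((PowerSeries.X : PowerSeries A) • x) =
      (PowerSeries.X : PowerSeries A) • x + (PowerSeries.X : PowerSeries A) • nabla x)
    (k : ℕ)
    (hnil : ∀ x : M, (nabla ^ k) x ∈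
      ((Ideal.span {(PowerSeries.X : PowerSeries A)}) • (⊤ : Submodule (PowerSeries A) M))) :
    Set.BijOn nabla
      (((Ideal.span {(PowerSeries.X : PowerSeries A)}) •
        (⊤ : Submodule (PowerSeries A) M) : Submodule (PowerSeries A) M) : Set M)
      (((Ideal.span {(PowerSeries.X : PowerSeries A)}) •
        (⊤ : Submodule (PowerSeries A) M) : Submodule (PowerSeries A) M) : Set M) := by
  have : IsAdicComplete (Ideal.span {(X : A⟦X⟧)}) M := .of_linearEquiv b.equivFun.symm
  have : Module.Free A⟦X⟧ M := .of_basis b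
  have hreg : IsSMulRegular M (X : A⟦X⟧) := Module.Flat.isSMulRegular_of_isRegular isRegular_X
  have h := IsAdicComplete.bijOn_pow_smul_top_of_gr (I := Ideal.span {(X : A⟦X⟧)}) (j := 1)
    (f := nabla.toAddMonoidHom) (fun m _ ↦ map_mem_span_X_pow_smul_top hLeib m)
    (mem_span_X_pow_succ_smul_top_of_map_mem hLeib hnil hreg)
    (exists_sub_map_mem_span_X_pow_succ_smul_top hLeib hnil)
  rw [pow_one] at h
  exact h
end

section
/- Let D be an n × n diagonal matrix over a field with diagonal entries t^{μ₁},…,t^{μ_n} in K((t)) where μ = (μ₁,…,μ_n) ∈ ℤⁿ, and let Λ_μ = D · K[[t]]ⁿ be the corresponding lattice. If λ, μ ∈ ℤⁿ and there exists an upper-triangular unipotent matrix V ∈ GL_n(K((t))) with V · Λ_μ = Λ_λ, then λ = μ. -/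
/-!
The `i`-th coordinate of `V (t^{μ i} eᵢ)` is `V i i · t^{μ i} = t^{μ i}`, and membership in `Λ_λ`
is coordinatewise, so `t^{μ i} ∈ K[[t]] · t^{λ i}`, i.e. `λ i ≤ μ i`. Applied to `V⁻¹`, which
is again upper unitriangular and maps `Λ_λ` onto `Λ_μ`, the same argument gives `μ i ≤ λ i`.
-/

open PowerSeries

theorem Submodule.mem_span_range_single_iff {R M ι : Type*} [Semiring R] [AddCommMonoid M]
    [Module R M] [DecidableEq ι] [Finite ι] (g : ι → M) (x : ι → M) :
    x ∈ span R (Set.range fun i => Pi.single i (g i)) ↔ ∀ i, ∃ c : R, c • g i = x i := by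
  have hspan : span R (Set.range fun i => Pi.single i (g i)) = pi Set.univ fun i => R ∙ g i := by
    simp_rw [span_range_eq_iSup, ← iSup_map_single, map_span, Set.image_singleton,
      LinearMap.coe_single]
  simp [hspan, mem_span_singleton]

theorem LaurentSeries.le_of_smul_single_eq_single {K : Type*} [CommRing K] [Nontrivial K]
    {a b : ℤ} {c : K⟦X⟧}
    (h : c • (HahnSeries.single b 1 : LaurentSeries K) = HahnSeries.single a 1) : b ≤ a := by
  by_contra! hab
  have hcoeff := congrArg (HahnSeries.coeff · a) h
  simp only [Algebra.smul_def, LaurentSeries.coe_algebraMap] at hcoeff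
  rw [← sub_add_cancel a b, HahnSeries.coeff_mul_single_add, HahnSeries.coeff_single_same,
    PowerSeries.coeff_coe, if_pos (by omega)] at hcoeff
  simp at hcoeff

theorem Matrix.IsUpperTriangular.mul_apply_self {ι R : Type*} [Fintype ι] [LinearOrder ι]
    [NonUnitalNonAssocSemiring R] {A B : Matrix ι ι R} (hA : A.IsUpperTriangular)
    (hB : B.IsUpperTriangular) (i : ι) : (A * B) i i = A i i * B i i := by
  rw [mul_apply, Finset.sum_eq_single i]
  · intro j _ hji
    rcases hji.lt_or_gt with hlt | hgt
    · rw [hA hlt, zero_mul]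
    · rw [hB hgt, mul_zero]
  · simp

theorem Matrix.IsUpperTriangular.inv_apply_self_mul_apply_self {ι R : Type*} [Fintype ι]
    [LinearOrder ι] [CommRing R] {A : Matrix ι ι R} (hA : A.IsUpperTriangular)
    (hdet : IsUnit A.det) (i : ι) : A⁻¹ i i * A i i = 1 := by
  have : Invertible A := A.invertibleOfIsUnitDet hdet
  rw [← IsUpperTriangular.mul_apply_self (blockTriangular_inv_of_blockTriangular hA) hA,
    nonsing_inv_mul A hdet, one_apply_eq]

namespace LaurentSeries

variable {K ι : Type*} [CommRing K] [DecidableEq ι]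

/-- The lattice `Λ_μ = t^μ · K[[t]]ⁿ` of the paper, with `t = X`. -/
noncomputable def diagonalLattice (μ : ι → ℤ) : Submodule K⟦X⟧ (ι → LaurentSeries K) :=
  Submodule.span K⟦X⟧ (Set.range fun i => Pi.single i (HahnSeries.single (μ i) 1))

variable [Fintype ι]

theorem le_of_map_diagonalLattice_le [Nontrivial K] {V : Matrix ι ι (LaurentSeries K)}
    (hV : ∀ i, V i i = 1) {μ ν : ι → ℤ}
    (h : (diagonalLattice μ).map (V.mulVecLin.restrictScalars K⟦X⟧) ≤ diagonalLattice ν) :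
    ν ≤ μ := by
  intro i
  have hmem := h (Submodule.mem_map_of_mem (Submodule.subset_span ⟨i, rfl⟩))
  obtain ⟨c, hc⟩ := (Submodule.mem_span_range_single_iff _ _).1 hmem i
  refine le_of_smul_single_eq_single (c := c) ?_
  simp [hc, hV]

theorem map_inv_diagonalLattice {V : Matrix ι ι (LaurentSeries K)} (hdet : IsUnit V.det)
    {μ ν : ι → ℤ}
    (h : (diagonalLattice μ).map (V.mulVecLin.restrictScalars K⟦X⟧) = diagonalLattice ν) :
    (diagonalLattice ν).map (V⁻¹.mulVecLin.restrictScalars K⟦X⟧) = diagonalLattice μ := by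
  rw [← h, ← Submodule.map_comp, ← LinearMap.restrictScalars_comp, ← Matrix.mulVecLin_mul,
    Matrix.nonsing_inv_mul V hdet, Matrix.mulVecLin_one, LinearMap.restrictScalars_id,
    Submodule.map_id]

end LaurentSeries

open LaurentSeries

/-- Disjointness of semi-infinite cells in the affine Grassmannian of GL_n: if a unipotent
upper-triangular matrix V over K((t)) maps the lattice Λ_μ = span{t^{μ_i} e_i} onto
Λ_λ = span{t^{λ_i} e_i}, then λ = μ. -/
theorem stmt_18 {K : Type*} [Field K] {n : ℕ} (μ lam : Fin n → ℤ)
    (V : Matrix (Fin n) (Fin n) (LaurentSeries K))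
    (hVtri : ∀ i j : Fin n, j < i → V i j = 0)
    (hVuni : ∀ i : Fin n, V i i = 1)
    (h : Submodule.map ((Matrix.mulVecLin V).restrictScalars (PowerSeries K))
        (Submodule.span (PowerSeries K)
          (Set.range fun i : Fin n =>
            Pi.single i (HahnSeries.single (μ i) (1 : K) : LaurentSeries K))) =
      Submodule.span (PowerSeries K)
        (Set.range fun i : Fin n =>
          Pi.single i (HahnSeries.single (lam i) (1 : K) : LaurentSeries K))) :
    lam = μ := by
  have hupper : V.IsUpperTriangular := fun i j hij => hVtri i j hij
  have hdet : IsUnit V.det := by simp [Matrix.det_of_isUpperTriangular hupper, hVuni]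
  have hinv : ∀ i, V⁻¹ i i = 1 := fun i => by
    simpa [hVuni] using hupper.inv_apply_self_mul_apply_self hdet i
  exact le_antisymm (le_of_map_diagonalLattice_le hVuni h.le)
    (le_of_map_diagonalLattice_le hinv (map_inv_diagonalLattice hdet h).le)
end
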